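/- In the 3-stack word of any permutation (the word over {A,B,C,D} recording the greedy 3-stack sorting algorithm's moves), there is no factor DA, no factor DB, and no factor CA. -/

import Mathlib

set_option linter.unusedVariables false

inductive Move | A | B | C | D
deriving DecidableEq, Repr

structure Config where
  input : List ℕ
  s1 : List ℕ
  s2 : List ℕ
  s3 : List ℕ
  out : List ℕ

def canA (c : Config) : Bool :=
  match c.input, c.s1 with
  | x :: _, [] => true
  | x :: _, t :: _ => decide (x < t)
  | [], _ => false

def canB (c : Config) : Bool :=
  match c.s1, c.s2 with
  | x :: _, [] => true
  | x :: _, t :: _ => decide (x < t)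
  | [], _ => false

def canC (c : Config) : Bool :=
  match c.s2, c.s3 with
  | x :: _, [] => true
  | x :: _, t :: _ => decide (x < t)
  | [], _ => false

def canD (c : Config) : Bool := !c.s3.isEmpty

def doA (c : Config) : Config :=
  { c with input := c.input.tail, s1 := c.input.headD 0 :: c.s1 }
def doB (c : Config) : Config :=
  { c with s1 := c.s1.tail, s2 := c.s1.headD 0 :: c.s2 }
def doC (c : Config) : Config :=
  { c with s2 := c.s2.tail, s3 := c.s2.headD 0 :: c.s3 }
def doD (c : Config) : Config :=
  { c with s3 := c.s3.tail, out := c.out ++ [c.s3.headD 0] }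

/-- One step of the greedy (priority `A > B > C > D`) 3-stack sorting algorithm:
`A` = input→S₁, `B` = S₁→S₂, `C` = S₂→S₃, `D` = S₃→output. -/
def step (c : Config) : Option (Move × Config) :=
  if canA c then some (.A, doA c)
  else if canB c then some (.B, doB c)
  else if canC c then some (.C, doC c)
  else if canD c then some (.D, doD c)
  else none

def runWord : ℕ → Config → List Move
  | 0, _ => []
  | fuel + 1, c =>
    match step c with
    | none => []
    | some (m, c') => m :: runWord fuel c'

def run : ℕ → Config → Config
  | 0, c => c
  | fuel + 1, c =>
    match step c with
    | none => c
    | some (_, c') => run fuel c'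

def initConfig (p : List ℕ) : Config := ⟨p, [], [], [], []⟩

/-- The 3-stack word of `p`: the sequence of moves of the greedy algorithm on `p`. -/
def stackWord (p : List ℕ) : List Move := runWord (4 * p.length) (initConfig p)

/-- The output of the greedy 3-stack sorting algorithm on `p`. -/
def output3 (p : List ℕ) : List ℕ := (run (4 * p.length) (initConfig p)).out

/-!
The greedy algorithm performs `C` only when `A` is impossible and `D` only when `A` and `B` are
both impossible. A `C` move leaves the input and `S₁` untouched, and a `D` move leaves the input,
`S₁` and `S₂` untouched, so whatever blocked those moves still blocks them one step later.
-/

def CanFollow : Move → Move → Prop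
  | .C, .A => False
  | .D, .A => False
  | .D, .B => False
  | _, _ => True

theorem canA_doC (c : Config) : canA (doC c) = canA c := rfl

theorem canA_doD (c : Config) : canA (doD c) = canA c := rfl

theorem canB_doD (c : Config) : canB (doD c) = canB c := rfl

theorem step_eq_some_C {c c' : Config} (h : step c = some (.C, c')) :
    canA c = false ∧ c' = doC c := by
  unfold step at h
  split_ifs at h with hA <;> cases h
  exact ⟨by simpa using hA, rfl⟩

theorem step_eq_some_D {c c' : Config} (h : step c = some (.D, c')) :
    canA c = false ∧ canB c = false ∧ c' = doD c := by
  unfold step at h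
  split_ifs at h with hA hB <;> cases h
  exact ⟨by simpa using hA, by simpa using hB, rfl⟩

theorem step_fst_ne_A {c c' : Config} {m : Move} (hA : canA c = false)
    (h : step c = some (m, c')) : m ≠ .A := by
  unfold step at h
  split_ifs at h <;> cases h <;> simp_all

theorem step_fst_ne_B {c c' : Config} {m : Move} (hA : canA c = false) (hB : canB c = false)
    (h : step c = some (m, c')) : m ≠ .B := by
  unfold step at h
  split_ifs at h <;> cases h <;> simp_all

theorem canFollow_of_step {c c' c'' : Config} {m m' : Move}
    (h : step c = some (m, c')) (h' : step c' = some (m', c'')) : CanFollow m m' := by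
  cases m <;> cases m' <;> try trivial
  · obtain ⟨hA, rfl⟩ := step_eq_some_C h
    exact step_fst_ne_A (by rwa [canA_doC]) h' rfl
  · obtain ⟨hA, -, rfl⟩ := step_eq_some_D h
    exact step_fst_ne_A (by rwa [canA_doD]) h' rfl
  · obtain ⟨hA, hB, rfl⟩ := step_eq_some_D h
    exact step_fst_ne_B (by rwa [canA_doD]) (by rwa [canB_doD]) h' rfl

theorem isChain_cons_runWord (fuel : ℕ) {c c' : Config} {m : Move}
    (h : step c = some (m, c')) : (m :: runWord fuel c').IsChain CanFollow := by
  induction fuel generalizing c c' m with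
  | zero => exact .singleton m
  | succ fuel ih =>
    rw [runWord]
    match h' : step c' with
    | none => exact .singleton m
    | some (m', c'') => exact .cons_cons (canFollow_of_step h h') (ih h')

theorem isChain_runWord (fuel : ℕ) (c : Config) : (runWord fuel c).IsChain CanFollow := by
  cases fuel with
  | zero => exact .nil
  | succ fuel =>
    rw [runWord]
    match h : step c with
    | none => exact .nil
    | some (m, c') => exact isChain_cons_runWord fuel h

theorem not_infix_stackWord {a b : Move} (hab : ¬ CanFollow a b) (p : List ℕ) :
    ¬ [a, b] <:+: stackWord p := fun h =>
  hab (List.isChain_pair.mp ((isChain_runWord _ _).infix h))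

theorem stmt_17_general (p : List ℕ) :
    ¬ ([Move.D, Move.A] <:+: stackWord p) ∧
    ¬ ([Move.D, Move.B] <:+: stackWord p) ∧
    ¬ ([Move.C, Move.A] <:+: stackWord p) :=
  ⟨not_infix_stackWord id p, not_infix_stackWord id p, not_infix_stackWord id p⟩

/-- In the 3-stack word of any permutation, a `D` move is never immediately
followed by an `A` or a `B` move, and a `C` move is never immediately
followed by an `A` move: there are no factors `DA`, `DB`, `CA`. -/
theorem stmt_17 (n : ℕ) (p : List ℕ) (hp : p.Perm (List.range' 1 n)) :
    ¬ ([Move.D, Move.A] <:+: stackWord p) ∧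
    ¬ ([Move.D, Move.B] <:+: stackWord p) ∧
    ¬ ([Move.C, Move.A] <:+: stackWord p) :=
  stmt_17_general p
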